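/- arXiv:1107.1417 — 7 statements merged into one kernel-verified Lean document; each statement's English description precedes it below -/
import Mathlib

section
/- Let 0<q<1 and let k,l be coprime positive integers. In O(SU_q(2)) the elements a = ββ* and b = α^l β^k satisfy the relations a* = a, ab = q^{-2l} ba, bb* = q^{2kl} a^k ∏_{m=0}^{l-1}(1 - q^{2m} a), and b*b = a^k ∏_{m=1}^{l}(1 - q^{-2m} a). -/
/-- The defining relations of `O(SU_q(2))`: `αβ = qβα`, `αβ* = qβ*α`, `ββ* = β*β`,
`αα* = α*α + (q⁻² - 1)ββ*`, `αα* + ββ* = 1`. -/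
structure SUq2Rels {A : Type*} [Ring A] [Algebra ℂ A] [StarRing A]
    (q : ℝ) (α β : A) : Prop where
  rel1 : α * β = (q : ℂ) • (β * α)
  rel2 : α * star β = (q : ℂ) • (star β * α)
  rel3 : β * star β = star β * β
  rel4 : α * star α = star α * α + ((q : ℂ)⁻¹ ^ 2 - 1) • (β * star β)
  rel5 : α * star α + β * star β = 1

/-- `A` together with `α β : A` is the universal unital complex `*`-algebra on
generators `α, β` subject to the `O(SU_q(2))` relations. -/
def IsUniversalSUq2 (q : ℝ) {A : Type*} [Ring A] [Algebra ℂ A] [StarRing A]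
    [StarModule ℂ A] (α β : A) : Prop :=
  SUq2Rels q α β ∧
  ∀ (B : Type) [Ring B] [Algebra ℂ B] [StarRing B] [StarModule ℂ B],
    ∀ α' β' : B, SUq2Rels q α' β' → ∃! f : A →⋆ₐ[ℂ] B, f α = α' ∧ f β = β'

/-- The defining relations of the quantum weighted projective line `O(WP_q(k,l))`:
`a* = a`, `ab = q^{-2l}ba`, `bb* = q^{2kl} a^k ∏_{m=0}^{l-1}(1-q^{2m}a)`,
`b*b = a^k ∏_{m=1}^{l}(1-q^{-2m}a)`. -/
structure WPRels {W : Type*} [Ring W] [Algebra ℂ W] [StarRing W]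
    (q : ℝ) (k l : ℕ) (a b : W) : Prop where
  rel0 : star a = a
  rel1 : a * b = ((q : ℂ)⁻¹ ^ (2 * l)) • (b * a)
  rel2 : b * star b = ((q : ℂ) ^ (2 * k * l)) •
      (a ^ k * ((List.range l).map (fun m => 1 - ((q : ℂ) ^ (2 * m)) • a)).prod)
  rel3 : star b * b =
      a ^ k * ((List.range l).map (fun m => 1 - ((q : ℂ)⁻¹ ^ (2 * (m + 1))) • a)).prod

/-- `W` together with `a b : W` is the universal unital complex `*`-algebra on
generators `a, b` subject to the `O(WP_q(k,l))` relations. -/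
def IsUniversalWP (q : ℝ) (k l : ℕ) {W : Type*} [Ring W] [Algebra ℂ W] [StarRing W]
    [StarModule ℂ W] (a b : W) : Prop :=
  WPRels q k l a b ∧
  ∀ (B : Type) [Ring B] [Algebra ℂ B] [StarRing B] [StarModule ℂ B],
    ∀ a' b' : B, WPRels q k l a' b' → ∃! f : W →⋆ₐ[ℂ] B, f a = a' ∧ f b = b'

section aux

variable {A : Type*} [Ring A] [Algebra ℂ A]

lemma aux_pow_left (c : ℂ) (x y : A) (h : x * y = c • (y * x)) :
    ∀ n : ℕ, x ^ n * y = c ^ n • (y * x ^ n)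
  | 0 => by simp
  | n + 1 => by
    rw [pow_succ, mul_assoc, h, mul_smul_comm, ← mul_assoc,
      aux_pow_left c x y h n, smul_mul_assoc, smul_smul, mul_assoc, ← pow_succ,
      ← pow_succ']

lemma aux_pow_right (c : ℂ) (x y : A) (h : x * y = c • (y * x)) :
    ∀ n : ℕ, x * y ^ n = c ^ n • (y ^ n * x)
  | 0 => by simp
  | n + 1 => by
    rw [pow_succ, ← mul_assoc, aux_pow_right c x y h n, smul_mul_assoc,
      mul_assoc, h, mul_smul_comm, smul_smul, ← mul_assoc, ← pow_succ, ← pow_succ]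

lemma aux_swap (c : ℂ) (hc : c ≠ 0) (x y : A) (h : x * y = c • (y * x)) :
    y * x = c⁻¹ • (x * y) := by
  rw [h, smul_smul, inv_mul_cancel₀ hc, one_smul]

end aux

/-- In `O(SU_q(2))`, the elements `a = ββ*` and `b = α^l β^k` satisfy
`a* = a`, `ab = q^{-2l}ba`, `bb* = q^{2kl} a^k ∏_{m=0}^{l-1}(1-q^{2m}a)`, and
`b*b = a^k ∏_{m=1}^{l}(1-q^{-2m}a)`. -/
theorem teardrop_generators_satisfy_relations
    (q : ℝ) (hq0 : 0 < q) (hq1 : q < 1)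
    (k l : ℕ) (hk : 0 < k) (hl : 0 < l) (hkl : Nat.Coprime k l)
    {A : Type*} [Ring A] [Algebra ℂ A] [StarRing A] [StarModule ℂ A]
    (α β : A) (huniv : IsUniversalSUq2 q α β) :
    WPRels q k l (β * star β) (α ^ l * β ^ k) := by
  obtain ⟨r, -⟩ := huniv
  have hqc : (q : ℂ) ≠ 0 := by exact_mod_cast hq0.ne'
  set a := β * star β with ha
  have hstar_a : star a = a := by rw [ha, star_mul, star_star]
  have hβ : Commute β (star β) := r.rel3
  have haβ : Commute a β := (Commute.refl β).mul_left hβ.symm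
  have haβ' : Commute a (star β) := hβ.mul_left (Commute.refl (star β))
  have hαa : α * a = ((q : ℂ) ^ 2) • (a * α) := by
    rw [ha, ← mul_assoc, r.rel1, smul_mul_assoc, mul_assoc, r.rel2, mul_smul_comm,
      smul_smul, ← mul_assoc, sq]
  have hαa' : a * α = ((q : ℂ)⁻¹ ^ 2) • (α * a) := by
    rw [inv_pow]
    exact aux_swap _ (pow_ne_zero 2 hqc) α a hαa
  have hsa' : a * star α = ((q : ℂ) ^ 2) • (star α * a) := by
    have h := congrArg star hαa
    simpa [star_mul, star_smul, hstar_a, star_pow, Complex.star_def,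
      Complex.conj_ofReal] using h
  have hsa : star α * a = ((q : ℂ)⁻¹ ^ 2) • (a * star α) := by
    rw [inv_pow]
    exact aux_swap _ (pow_ne_zero 2 hqc) a (star α) hsa'
  have h5 : α * star α = 1 - a := by
    rw [eq_sub_iff_add_eq]
    exact r.rel5
  have h4 : star α * α = 1 - ((q : ℂ)⁻¹ ^ 2) • a := by
    have h := r.rel4
    rw [h5, sub_smul, one_smul] at h
    have h2 := eq_sub_of_add_eq h.symm
    rw [h2]
    abel
  have hcomm_a : ∀ (f : ℕ → ℂ) (n : ℕ),
      Commute a (((List.range n).map (fun m => 1 - f m • a)).prod) := by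
    intro f n
    refine Commute.list_prod_right _ _ fun x hx => ?_
    simp only [List.mem_map] at hx
    obtain ⟨m, -, rfl⟩ := hx
    exact (Commute.one_right a).sub_right ((Commute.refl a).smul_right _)
  have hcomm_β : ∀ (f : ℕ → ℂ) (n : ℕ),
      Commute (((List.range n).map (fun m => 1 - f m • a)).prod) β := by
    intro f n
    refine Commute.list_prod_left _ _ fun x hx => ?_
    simp only [List.mem_map] at hx
    obtain ⟨m, -, rfl⟩ := hx
    exact (Commute.one_left β).sub_left (haβ.smul_left _)
  have hP : ∀ n : ℕ, α ^ n * (star α) ^ n =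
      ((List.range n).map (fun m => 1 - ((q : ℂ) ^ (2 * m)) • a)).prod := by
    intro n
    induction n with
    | zero => simp
    | succ n ih =>
      have hcomm : Commute (1 - ((q : ℂ) ^ (2 * n)) • a)
          (((List.range n).map (fun m => 1 - ((q : ℂ) ^ (2 * m)) • a)).prod) :=
        (Commute.one_left _).sub_left ((hcomm_a _ n).smul_left _)
      calc α ^ (n + 1) * (star α) ^ (n + 1)
          = α ^ n * (α * star α) * (star α) ^ n := by
            rw [pow_succ, pow_succ']
            noncomm_ring
        _ = α ^ n * (1 - a) * (star α) ^ n := by rw [h5]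
        _ = (α ^ n - ((q : ℂ) ^ 2) ^ n • (a * α ^ n)) * (star α) ^ n := by
            rw [mul_sub, mul_one, aux_pow_left _ _ _ hαa n]
        _ = (1 - ((q : ℂ) ^ (2 * n)) • a) * (α ^ n * (star α) ^ n) := by
            rw [pow_mul]
            simp only [sub_mul, smul_mul_assoc, one_mul, mul_assoc]
        _ = _ := by
            rw [ih, List.range_succ, List.map_append, List.prod_append,
              List.map_singleton, List.prod_singleton, hcomm.eq]
  have hQ : ∀ n : ℕ, (star α) ^ n * α ^ n =
      ((List.range n).map (fun m => 1 - ((q : ℂ)⁻¹ ^ (2 * (m + 1))) • a)).prod := by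
    intro n
    induction n with
    | zero => simp
    | succ n ih =>
      have hcomm : Commute (1 - ((q : ℂ)⁻¹ ^ (2 * (n + 1))) • a)
          (((List.range n).map
            (fun m => 1 - ((q : ℂ)⁻¹ ^ (2 * (m + 1))) • a)).prod) :=
        (Commute.one_left _).sub_left ((hcomm_a _ n).smul_left _)
      calc (star α) ^ (n + 1) * α ^ (n + 1)
          = (star α) ^ n * (star α * α) * α ^ n := by
            rw [pow_succ, pow_succ']
            noncomm_ring
        _ = (star α) ^ n * (1 - ((q : ℂ)⁻¹ ^ 2) • a) * α ^ n := by rw [h4]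
        _ = ((star α) ^ n - (((q : ℂ)⁻¹ ^ 2) ^ (n + 1)) •
              (a * (star α) ^ n)) * α ^ n := by
            rw [mul_sub, mul_one, mul_smul_comm, aux_pow_left _ _ _ hsa n, smul_smul,
              ← pow_succ']
        _ = (1 - ((q : ℂ)⁻¹ ^ (2 * (n + 1))) • a) * ((star α) ^ n * α ^ n) := by
            rw [pow_mul]
            simp only [sub_mul, smul_mul_assoc, one_mul, mul_assoc]
        _ = _ := by
            rw [ih, List.range_succ, List.map_append, List.prod_append,
              List.map_singleton, List.prod_singleton, hcomm.eq]
  have hstarb : star (α ^ l * β ^ k) = (star β) ^ k * (star α) ^ l := by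
    rw [star_mul, star_pow, star_pow]
  refine ⟨hstar_a, ?_, ?_, ?_⟩
  · -- rel1
    have h1 : a * α ^ l = (((q : ℂ)⁻¹ ^ 2) ^ l) • (α ^ l * a) :=
      aux_pow_right _ a α hαa' l
    calc a * (α ^ l * β ^ k) = (a * α ^ l) * β ^ k := (mul_assoc _ _ _).symm
      _ = (((q : ℂ)⁻¹ ^ 2) ^ l) • (α ^ l * (a * β ^ k)) := by
          rw [h1, smul_mul_assoc, mul_assoc]
      _ = (((q : ℂ)⁻¹ ^ 2) ^ l) • (α ^ l * (β ^ k * a)) := by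
          rw [(haβ.pow_right k).eq]
      _ = ((q : ℂ)⁻¹ ^ (2 * l)) • (α ^ l * β ^ k * a) := by
          rw [pow_mul, ← mul_assoc]
  · -- rel2
    have hββ : β ^ k * (star β) ^ k = a ^ k := (hβ.mul_pow k).symm
    have hαl_a : α ^ l * a = (((q : ℂ) ^ 2) ^ l) • (a * α ^ l) :=
      aux_pow_left _ α a hαa l
    have hαl_ak : α ^ l * a ^ k = ((((q : ℂ) ^ 2) ^ l) ^ k) • (a ^ k * α ^ l) :=
      aux_pow_right _ (α ^ l) a hαl_a k
    calc α ^ l * β ^ k * star (α ^ l * β ^ k)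
        = α ^ l * (β ^ k * (star β) ^ k) * (star α) ^ l := by
          rw [hstarb]
          noncomm_ring
      _ = α ^ l * a ^ k * (star α) ^ l := by rw [hββ]
      _ = ((((q : ℂ) ^ 2) ^ l) ^ k) • (a ^ k * (α ^ l * (star α) ^ l)) := by
          rw [hαl_ak, smul_mul_assoc, mul_assoc]
      _ = _ := by
          have he : (((q : ℂ) ^ 2) ^ l) ^ k = (q : ℂ) ^ (2 * k * l) := by
            rw [← pow_mul, ← pow_mul]
            congr 1
            ring
          rw [hP l, he]
  · -- rel3
    calc star (α ^ l * β ^ k) * (α ^ l * β ^ k)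
        = (star β) ^ k * ((star α) ^ l * α ^ l) * β ^ k := by
          rw [hstarb]
          noncomm_ring
      _ = (star β) ^ k * ((List.range l).map
            (fun m => 1 - ((q : ℂ)⁻¹ ^ (2 * (m + 1))) • a)).prod * β ^ k := by
          rw [hQ l]
      _ = (star β) ^ k * β ^ k * ((List.range l).map
            (fun m => 1 - ((q : ℂ)⁻¹ ^ (2 * (m + 1))) • a)).prod := by
          rw [mul_assoc, ((hcomm_β _ l).pow_right k).eq, ← mul_assoc]
      _ = _ := by
          rw [← hβ.symm.mul_pow k, ← r.rel3]
end

section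
/- Let 0<q<1, let k,l be coprime positive integers and let s ∈ {1,…,l}. The bounded operators A_s, B_s on ℓ²(ℕ) satisfy: A_s is self-adjoint, A_s B_s = q^{-2l} B_s A_s, B_s B_s* = q^{2kl} A_s^k ∏_{m=0}^{l-1}(1 - q^{2m} A_s), and B_s* B_s = A_s^k ∏_{m=1}^{l}(1 - q^{-2m} A_s). Consequently a ↦ A_s, b ↦ B_s defines a unital *-representation π_s of O(WP_q(k,l)) on ℓ²(ℕ). -/
noncomputable section

/-- The Hilbert space `ℓ²(ℕ)` of square-summable complex sequences. -/
abbrev ℓ2 : Type := lp (fun _ : ℕ => ℂ) 2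

/-- The standard orthonormal basis vectors of `ℓ²(ℕ)`. -/
def e (p : ℕ) : ℓ2 := lp.single 2 p 1

open scoped InnerProductSpace

lemma coord_eq_inner (v : ℓ2) (p : ℕ) : v p = ⟪e p, v⟫_ℂ := by
  rw [e, lp.inner_single_left]; simp [RCLike.inner_apply]

lemma vec_ext {v w : ℓ2} (h : ∀ p, ⟪e p, v⟫_ℂ = ⟪e p, w⟫_ℂ) : v = w := by
  apply lp.ext; funext p
  rw [show v p = ⟪e p, v⟫_ℂ from coord_eq_inner v p,
    show w p = ⟪e p, w⟫_ℂ from coord_eq_inner w p, h]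

lemma clm_ext {T S : ℓ2 →L[ℂ] ℓ2} (h : ∀ p, T (e p) = S (e p)) : T = S := by
  have hs : star T = star S := by
    ext x p
    rw [coord_eq_inner, coord_eq_inner, ContinuousLinearMap.star_eq_adjoint,
      ContinuousLinearMap.star_eq_adjoint, ContinuousLinearMap.adjoint_inner_right,
      ContinuousLinearMap.adjoint_inner_right, h]
  simpa using congrArg star hs

lemma inner_e_e (p p' : ℕ) : ⟪e p, e p'⟫_ℂ = if p' = p then 1 else 0 := by
  rw [← coord_eq_inner, e]
  rcases eq_or_ne p' p with h | h
  · subst h; rw [lp.single_apply_self, if_pos rfl]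
  · rw [lp.single_apply_ne _ _ _ (Ne.symm h), if_neg h]

lemma star_apply_e (T : ℓ2 →L[ℂ] ℓ2) (p : ℕ) (w : ℓ2)
    (h : ∀ p', ⟪T (e p'), e p⟫_ℂ = ⟪e p', w⟫_ℂ) : star T (e p) = w := by
  apply vec_ext; intro p'
  rw [ContinuousLinearMap.star_eq_adjoint, ContinuousLinearMap.adjoint_inner_right, h]

lemma eigen_pow (A : ℓ2 →L[ℂ] ℓ2) (v : ℓ2) (lam : ℂ) (hv : A v = lam • v) (n : ℕ) :
    (A ^ n) v = lam ^ n • v := by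
  induction n with
  | zero => simp
  | succ n ih =>
    rw [pow_succ, ContinuousLinearMap.mul_apply, hv, map_smul, ih, smul_smul, pow_succ, mul_comm]

lemma eigen_list_prod (A : ℓ2 →L[ℂ] ℓ2) (v : ℓ2) (lam : ℂ) (hv : A v = lam • v)
    (f : ℕ → ℂ) (n : ℕ) :
    (((List.range n).map (fun m => (1 : ℓ2 →L[ℂ] ℓ2) - f m • A)).prod) v
      = (∏ m ∈ Finset.range n, (1 - f m * lam)) • v := by
  induction n with
  | zero => simp
  | succ n ih =>
    rw [List.range_succ, List.map_append, List.prod_append, List.map_singleton,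
      List.prod_singleton, ContinuousLinearMap.mul_apply]
    have hx : ((1 : ℓ2 →L[ℂ] ℓ2) - f n • A) v = (1 - f n * lam) • v := by
      simp [ContinuousLinearMap.sub_apply, hv, smul_smul, sub_smul]
    rw [hx, map_smul, ih, smul_smul, Finset.prod_range_succ, mul_comm]

/-- the coefficient of `B_s`. -/
def cc (q : ℝ) (k l s p : ℕ) : ℝ :=
  q ^ (k * (l * p + s)) *
    ∏ r ∈ Finset.range l, Real.sqrt (1 - q ^ (2 * (l * p + s) - 2 * (r + 1)))

/-- The bounded operators `A_s, B_s` on `ℓ²(ℕ)` given by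
`A_s e_p = q^{2(lp+s)} e_p`, `B_s e_0 = 0`,
`B_s e_p = q^{k(lp+s)} ∏_{r=1}^{l}(1-q^{2(lp+s-r)})^{1/2} e_{p-1}` satisfy the defining
relations of `O(WP_q(k,l))` (with `star` the adjoint), and hence `a ↦ A_s`, `b ↦ B_s`
defines a unital `*`-representation `π_s` of `O(WP_q(k,l))` on `ℓ²(ℕ)`. -/
theorem teardrop_representation
    (q : ℝ) (hq0 : 0 < q) (hq1 : q < 1)
    (k l : ℕ) (hk : 0 < k) (hl : 0 < l) (hkl : Nat.Coprime k l)
    (s : ℕ) (hs1 : 1 ≤ s) (hsl : s ≤ l)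
    (A B : ℓ2 →L[ℂ] ℓ2)
    (hA : ∀ p : ℕ, A (e p) = ((q : ℂ) ^ (2 * (l * p + s))) • e p)
    (hB0 : B (e 0) = 0)
    (hB : ∀ p : ℕ, B (e (p + 1)) =
      (((q : ℂ) ^ (k * (l * (p + 1) + s))) *
        ((∏ r ∈ Finset.range l,
          Real.sqrt (1 - q ^ (2 * (l * (p + 1) + s) - 2 * (r + 1))) : ℝ) : ℂ)) • e p)
    {W : Type*} [Ring W] [Algebra ℂ W] [StarRing W] [StarModule ℂ W]
    (a b : W) (hW : IsUniversalWP q k l a b) :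
    WPRels q k l A B ∧
      ∃ π : W →⋆ₐ[ℂ] (ℓ2 →L[ℂ] ℓ2), π a = A ∧ π b = B := by
  have hq : (q : ℂ) ≠ 0 := Complex.ofReal_ne_zero.mpr hq0.ne'
  -- rewrite hB using cc
  have hBc : ∀ p : ℕ, B (e (p + 1)) = ((cc q k l s (p + 1) : ℝ) : ℂ) • e p := by
    intro p; rw [hB p]; unfold cc; push_cast; ring_nf
  -- nonnegativity of factors
  have hnn : ∀ p r : ℕ, r < l → 0 ≤ 1 - q ^ (2 * (l * (p + 1) + s) - 2 * (r + 1)) := by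
    intro p r hr
    have h1 : l ≤ l * (p + 1) := Nat.le_mul_of_pos_right l (Nat.succ_pos p)
    have hne : 2 * (l * (p + 1) + s) - 2 * (r + 1) ≠ 0 := by omega
    have := pow_lt_one₀ hq0.le hq1 hne
    linarith
  -- square of cc
  have csq : ∀ p : ℕ, cc q k l s (p + 1) * cc q k l s (p + 1)
      = q ^ (2 * (k * (l * (p + 1) + s))) *
        ∏ r ∈ Finset.range l, (1 - q ^ (2 * (l * (p + 1) + s) - 2 * (r + 1))) := by
    intro p
    unfold cc
    rw [mul_mul_mul_comm, ← pow_add, ← Finset.prod_mul_distrib]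
    congr 1
    · congr 1; ring
    · exact Finset.prod_congr rfl fun r hr =>
        Real.mul_self_sqrt (hnn p r (Finset.mem_range.mp hr))
  have csqC : ∀ p : ℕ, ((cc q k l s (p + 1) : ℝ) : ℂ) * ((cc q k l s (p + 1) : ℝ) : ℂ)
      = (q : ℂ) ^ (2 * (k * (l * (p + 1) + s))) *
        ∏ r ∈ Finset.range l, (1 - (q : ℂ) ^ (2 * (l * (p + 1) + s) - 2 * (r + 1))) := by
    intro p
    rw [← Complex.ofReal_mul, csq p]
    push_cast
    rfl
  -- star of A and B on basis vectors
  have hstarA : star A = A := by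
    apply clm_ext
    intro p
    apply star_apply_e
    intro p'
    rw [hA p', inner_smul_left, inner_e_e, hA p, inner_smul_right, inner_e_e]
    rcases eq_or_ne p p' with h | h
    · subst h; simp [← Complex.ofReal_pow]
    · simp [if_neg h, if_neg (Ne.symm h)]
  have hstarB : ∀ p : ℕ, star B (e p) = ((cc q k l s (p + 1) : ℝ) : ℂ) • e (p + 1) := by
    intro p
    apply star_apply_e
    intro p'
    rw [inner_smul_right, inner_e_e]
    cases p' with
    | zero =>
      rw [hB0]
      simp
    | succ p' =>
      rw [hBc p', inner_smul_left, inner_e_e]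
      rcases eq_or_ne p p' with h | h
      · subst h; simp [Complex.conj_ofReal]
      · simp [if_neg h, if_neg fun hh => h (Nat.succ_injective hh).symm]
  -- the relations
  have rels : WPRels q k l A B := by
    constructor
    · exact hstarA
    · -- rel1
      apply clm_ext
      intro p
      rw [ContinuousLinearMap.mul_apply, ContinuousLinearMap.smul_apply,
        ContinuousLinearMap.mul_apply]
      cases p with
      | zero => rw [hB0, hA 0, map_smul, hB0]; simp
      | succ p =>
        rw [hBc p, hA (p + 1), map_smul, map_smul, hA p, hBc p, smul_smul, smul_smul, smul_smul]
        congr 1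
        have key : ((q : ℂ)⁻¹) ^ (2 * l) * (q : ℂ) ^ (2 * (l * (p + 1) + s))
            = (q : ℂ) ^ (2 * (l * p + s)) := by
          rw [show 2 * (l * (p + 1) + s) = 2 * l + 2 * (l * p + s) by ring, pow_add,
            ← mul_assoc, inv_pow, inv_mul_cancel₀ (pow_ne_zero _ hq), one_mul]
        rw [← key]; ring
    · -- rel2
      apply clm_ext
      intro p
      rw [ContinuousLinearMap.mul_apply, hstarB p, map_smul, hBc p,
        ContinuousLinearMap.smul_apply, ContinuousLinearMap.mul_apply,
        eigen_list_prod A (e p) _ (hA p), map_smul,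
        eigen_pow A (e p) _ (hA p), smul_smul, smul_smul, smul_smul]
      congr 1
      rw [csqC p]
      have hprod : ∏ r ∈ Finset.range l, (1 - (q : ℂ) ^ (2 * (l * (p + 1) + s) - 2 * (r + 1)))
          = ∏ m ∈ Finset.range l, (1 - (q : ℂ) ^ (2 * m) * (q : ℂ) ^ (2 * (l * p + s))) := by
        rw [← Finset.prod_range_reflect]
        apply Finset.prod_congr rfl
        intro m hm
        have hm' : m < l := Finset.mem_range.mp hm
        have hlp : l * (p + 1) = l * p + l := by ring
        rw [← pow_add]
        congr 2
        omega
      rw [hprod, ← pow_mul, show 2 * (l * p + s) * k = 2 * (k * (l * p + s)) by ring]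
      rw [show 2 * (k * (l * (p + 1) + s)) = 2 * k * l + 2 * (k * (l * p + s)) by ring, pow_add]
      ring
    · -- rel3
      apply clm_ext
      intro p
      rw [ContinuousLinearMap.mul_apply, ContinuousLinearMap.mul_apply,
        eigen_list_prod A (e p) _ (hA p), map_smul, eigen_pow A (e p) _ (hA p), smul_smul]
      cases p with
      | zero =>
        rw [hB0, map_zero]
        have hzero : ∏ m ∈ Finset.range l,
            (1 - ((q : ℂ)⁻¹) ^ (2 * (m + 1)) * (q : ℂ) ^ (2 * (l * 0 + s))) = 0 := by
          apply Finset.prod_eq_zero (Finset.mem_range.mpr (by omega : s - 1 < l))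
          rw [show s - 1 + 1 = s by omega, show l * 0 + s = s by ring, inv_pow,
            inv_mul_cancel₀ (pow_ne_zero _ hq), sub_self]
        rw [hzero, zero_mul, zero_smul]
      | succ p =>
        rw [hBc p, map_smul, hstarB p, smul_smul]
        congr 1
        have hfac : ∀ m : ℕ, m < l →
            ((q : ℂ)⁻¹) ^ (2 * (m + 1)) * (q : ℂ) ^ (2 * (l * (p + 1) + s))
              = (q : ℂ) ^ (2 * (l * (p + 1) + s) - 2 * (m + 1)) := by
          intro m hm
          have h1 : l ≤ l * (p + 1) := Nat.le_mul_of_pos_right l (Nat.succ_pos p)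
          have hd : 2 * (m + 1) ≤ 2 * (l * (p + 1) + s) := by omega
          have hE : (q : ℂ) ^ (2 * (l * (p + 1) + s))
              = (q : ℂ) ^ (2 * (l * (p + 1) + s) - 2 * (m + 1)) * (q : ℂ) ^ (2 * (m + 1)) := by
            rw [← pow_add, Nat.sub_add_cancel hd]
          rw [hE, inv_pow, mul_comm, mul_assoc, mul_inv_cancel₀ (pow_ne_zero _ hq), mul_one]
        have hprod3 : ∏ m ∈ Finset.range l,
            (1 - ((q : ℂ)⁻¹) ^ (2 * (m + 1)) * (q : ℂ) ^ (2 * (l * (p + 1) + s)))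
            = ∏ m ∈ Finset.range l,
              (1 - (q : ℂ) ^ (2 * (l * (p + 1) + s) - 2 * (m + 1))) :=
          Finset.prod_congr rfl fun m hm => by rw [hfac m (Finset.mem_range.mp hm)]
        rw [hprod3, csqC p, ← pow_mul,
          show 2 * (l * (p + 1) + s) * k = 2 * (k * (l * (p + 1) + s)) by ring]
        exact (mul_comm _ _)
  refine ⟨rels, ?_⟩
  obtain ⟨-, huniv⟩ := hW
  obtain ⟨f, hf, -⟩ := huniv (ℓ2 →L[ℂ] ℓ2) A B rels
  exact ⟨f, hf.1, hf.2⟩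
end
end

section
/- Let 0<q<1, let k,l be coprime positive integers, let H be a complex Hilbert space and let A, B be bounded operators on H with A* = A satisfying AB = q^{-2l}BA and B*B = A^k ∏_{m=1}^{l}(1 - q^{-2m}A). If λ is in the spectrum of A and λ^k ∏_{m=1}^{l}(1 - q^{-2m}λ) ≠ 0, then q^{-2l}λ is in the spectrum of A. -/
/-!
If `μλ ∉ σ(a)`, the intertwining `(μλ - a) b = μ b (λ - a)` lets us write `b = c (λ - a)`, and since
`λ` is real, `p(a) = b⋆b = (λ - a) c⋆c (λ - a)`. As `a - λ` divides `p(a) - p(λ)` inside the commutative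
algebra generated by `a`, the nonzero scalar `p(λ)` is then a multiple of `λ - a` on both sides, so
`λ - a` is invertible, contradicting `λ ∈ σ(a)`.
-/

open Polynomial

theorem isUnit_of_isUnit_mul_of_isUnit_mul {M : Type*} [Monoid M] {x y z : M}
    (hxy : IsUnit (x * y)) (hzx : IsUnit (z * x)) : IsUnit x :=
  isUnit_iff_exists_and_exists.mpr
    ⟨⟨y * ↑hxy.unit⁻¹, by rw [← mul_assoc, hxy.mul_val_inv]⟩,
      ⟨↑hzx.unit⁻¹ * z, by rw [mul_assoc, hzx.val_inv_mul]⟩⟩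

theorem Finset.prod_Icc_one_eq_list_prod_range {M : Type*} [CommMonoid M] (f : ℕ → M) (n : ℕ) :
    ∏ m ∈ Finset.Icc 1 n, f m = ((List.range n).map fun m => f (m + 1)).prod := by
  rw [← List.prod_toFinset _ List.nodup_range, List.toFinset_range, Finset.range_eq_Ico,
    Finset.prod_Ico_add' f]
  rfl

section Spectrum

variable {𝕜 R : Type*} [Field 𝕜] [Ring R] [Algebra 𝕜 R]

theorem exists_eq_mul_algebraMap_sub_of_notMem_spectrum {a b : R} {μ lam : 𝕜}
    (hab : a * b = μ • (b * a)) (h : μ * lam ∉ spectrum 𝕜 a) :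
    ∃ c, b = c * (algebraMap 𝕜 R lam - a) := by
  obtain ⟨u, hu⟩ := spectrum.notMem_iff.mp h
  have intertwine :
      (algebraMap 𝕜 R (μ * lam) - a) * b = μ • (b * (algebraMap 𝕜 R lam - a)) := by
    rw [sub_mul, hab, mul_sub, smul_sub, map_mul, mul_assoc, Algebra.commutes lam b, ← mul_assoc,
      ← Algebra.smul_def μ, smul_mul_assoc]
  refine ⟨μ • (↑u⁻¹ * b), ?_⟩
  rw [smul_mul_assoc, mul_assoc, ← mul_smul_comm, ← intertwine, ← mul_assoc, ← hu, u.inv_mul,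
    one_mul]

theorem notMem_spectrum_of_aeval_eq_mul_mul {a d : R} {lam : 𝕜} {p : 𝕜[X]}
    (hp : p.eval lam ≠ 0)
    (h : aeval a p = (algebraMap 𝕜 R lam - a) * d * (algebraMap 𝕜 R lam - a)) :
    lam ∉ spectrum 𝕜 a := by
  set x := algebraMap 𝕜 R lam - a
  obtain ⟨s, hs⟩ := X_sub_C_dvd_sub_C_eval (a := lam) (p := p)
  have hps : algebraMap 𝕜 R (p.eval lam) = aeval a p + x * aeval a s := by
    have := congrArg (aeval a) hs
    simp only [map_sub, map_mul, aeval_X, aeval_C] at this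
    rw [show x = -(a - algebraMap 𝕜 R lam) from (neg_sub _ _).symm, neg_mul, ← this]
    abel
  have hcomm : Commute x (aeval a s) := by
    have := (Commute.all (C lam - X) s).map (aeval a)
    rwa [map_sub, aeval_C, aeval_X] at this
  have hunit : IsUnit (algebraMap 𝕜 R (p.eval lam)) := (Ne.isUnit hp).map _
  rw [spectrum.mem_iff, not_not]
  refine isUnit_of_isUnit_mul_of_isUnit_mul (y := d * x + aeval a s) (z := x * d + aeval a s) ?_ ?_
  · rwa [mul_add, ← mul_assoc, ← h, ← hps]
  · rwa [add_mul, ← hcomm.eq, ← h, ← hps]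

theorem mul_mem_spectrum_of_mul_eq_smul_mul [StarRing 𝕜] [StarRing R] [StarModule 𝕜 R]
    {a b : R} {μ lam : 𝕜} (ha : IsSelfAdjoint a) (hlam : IsSelfAdjoint lam)
    (hab : a * b = μ • (b * a)) {p : 𝕜[X]} (hp : star b * b = aeval a p)
    (hmem : lam ∈ spectrum 𝕜 a) (hplam : p.eval lam ≠ 0) : μ * lam ∈ spectrum 𝕜 a := by
  by_contra h
  obtain ⟨c, rfl⟩ := exists_eq_mul_algebraMap_sub_of_notMem_spectrum hab h
  have hx : IsSelfAdjoint (algebraMap 𝕜 R lam - a) := (hlam.algebraMap R).sub ha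
  refine notMem_spectrum_of_aeval_eq_mul_mul (d := star c * c) hplam ?_ hmem
  rw [← hp, star_mul, hx.star_eq, mul_assoc, mul_assoc, mul_assoc]

end Spectrum

theorem spectrum_shift_general
    (q : ℝ) (k l : ℕ)
    {H : Type*} [NormedAddCommGroup H] [InnerProductSpace ℂ H] [CompleteSpace H]
    (A B : H →L[ℂ] H) (hsa : star A = A)
    (h1 : A * B = ((q : ℂ)⁻¹ ^ (2 * l)) • (B * A))
    (h3 : star B * B =
      A ^ k * ((List.range l).map (fun m => 1 - ((q : ℂ)⁻¹ ^ (2 * (m + 1))) • A)).prod)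
    (lam : ℂ) (hlam : lam ∈ spectrum ℂ A)
    (hne : lam ^ k * ∏ m ∈ Finset.Icc 1 l, (1 - (q : ℂ)⁻¹ ^ (2 * m) * lam) ≠ 0) :
    ((q : ℂ)⁻¹ ^ (2 * l)) * lam ∈ spectrum ℂ A := by
  let p : ℂ[X] := X ^ k * ∏ m ∈ Finset.Icc 1 l, (1 - C ((q : ℂ)⁻¹ ^ (2 * m)) * X)
  have hlam_real : IsSelfAdjoint lam := by
    rw [IsSelfAdjoint.mem_spectrum_eq_re (a := A) hsa hlam]
    exact Complex.conj_ofReal _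
  refine mul_mem_spectrum_of_mul_eq_smul_mul hsa hlam_real h1 (p := p) ?_ hlam ?_
  · simp only [p, h3, map_mul, map_pow, aeval_X, Finset.prod_Icc_one_eq_list_prod_range,
      map_list_prod, List.map_map, Function.comp_def, map_sub, map_one, aeval_C, Algebra.smul_def]
  · simpa [p, eval_prod] using hne

/-- If `A, B` are bounded operators on a complex Hilbert space with
`A* = A`, `AB = q^{-2l}BA`, `B*B = A^k ∏_{m=1}^{l}(1 - q^{-2m}A)`, and `λ` lies in the
spectrum of `A` with `λ^k ∏_{m=1}^{l}(1 - q^{-2m}λ) ≠ 0`, then `q^{-2l}λ` also lies in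
the spectrum of `A`. -/
theorem spectrum_shift
    (q : ℝ) (hq0 : 0 < q) (hq1 : q < 1)
    (k l : ℕ) (hk : 0 < k) (hl : 0 < l) (hkl : Nat.Coprime k l)
    {H : Type*} [NormedAddCommGroup H] [InnerProductSpace ℂ H] [CompleteSpace H]
    (A B : H →L[ℂ] H) (hsa : star A = A)
    (h1 : A * B = ((q : ℂ)⁻¹ ^ (2 * l)) • (B * A))
    (h3 : star B * B =
      A ^ k * ((List.range l).map (fun m => 1 - ((q : ℂ)⁻¹ ^ (2 * (m + 1))) • A)).prod)
    (lam : ℂ) (hlam : lam ∈ spectrum ℂ A)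
    (hne : lam ^ k * ∏ m ∈ Finset.Icc 1 l, (1 - (q : ℂ)⁻¹ ^ (2 * m) * lam) ≠ 0) :
    ((q : ℂ)⁻¹ ^ (2 * l)) * lam ∈ spectrum ℂ A :=
  spectrum_shift_general q k l A B hsa h1 h3 lam hlam hne
end

section
/- Let 0<q<1 and let l be a positive integer. The ℤ-graded algebra O(L_q(l;1,l)) with grading determined by deg c = 1, deg d = -1 is strongly graded: L_m L_n = L_{m+n} for all m,n ∈ ℤ; in particular 1 ∈ L_1 L_{-1} and 1 ∈ L_{-1} L_1. -/
/-- The defining relations of the quantum lens space `O(L_q(l;1,l))`: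
`cd = q^l dc`, `cd* = q^l d*c`, `dd* = d*d`, `cc* = ∏_{m=0}^{l-1}(1-q^{2m}dd*)`,
`c*c = ∏_{m=1}^{l}(1-q^{-2m}dd*)`. -/
structure LensRels {A : Type*} [Ring A] [Algebra ℂ A] [StarRing A]
    (q : ℝ) (l : ℕ) (c d : A) : Prop where
  rel1 : c * d = ((q : ℂ) ^ l) • (d * c)
  rel2 : c * star d = ((q : ℂ) ^ l) • (star d * c)
  rel3 : d * star d = star d * d
  rel4 : c * star c =
      ((List.range l).map (fun m => 1 - ((q : ℂ) ^ (2 * m)) • (d * star d))).prod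
  rel5 : star c * c =
      ((List.range l).map (fun m => 1 - ((q : ℂ)⁻¹ ^ (2 * (m + 1))) • (d * star d))).prod

/-- `A` together with `c d : A` is the universal unital complex `*`-algebra on
generators `c, d` subject to the `O(L_q(l;1,l))` relations. -/
def IsUniversalLens (q : ℝ) (l : ℕ) {A : Type*} [Ring A] [Algebra ℂ A] [StarRing A]
    [StarModule ℂ A] (c d : A) : Prop :=
  LensRels q l c d ∧
  ∀ (B : Type) [Ring B] [Algebra ℂ B] [StarRing B] [StarModule ℂ B],
    ∀ c' d' : B, LensRels q l c' d' → ∃! f : A →⋆ₐ[ℂ] B, f c = c' ∧ f d = d'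

/-!
Both `cc*` and `c*c` are products of factors `1 - λ • dd*`, so each equals `1 - dd* y` with `y` of
degree `0`. As `dd* = d*d`, this writes `1 = cc* + d*(dy) ∈ L_1 L_{-1}` and
`1 = c*c + d(d*y) ∈ L_{-1} L_1`. Multiplying these gives `1 ∈ L_n L_{-n}` for every `n`, and then
`L_{m+n} = L_{m+n} · 1 ⊆ L_{m+n} L_{-n} L_n ⊆ L_m L_n`.
-/

theorem Subalgebra.exists_prod_map_one_sub_smul_eq {ι R A : Type*} [CommRing R] [Ring A]
    [Algebra R A] {S : Subalgebra R A} {x : A} (hx : x ∈ S) (f : ι → R) (L : List ι) :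
    ∃ y ∈ S, (L.map fun i => 1 - f i • x).prod = 1 - x * y := by
  induction L with
  | nil => exact ⟨0, S.zero_mem, by simp⟩
  | cons i L ih =>
    obtain ⟨y, hyS, hy⟩ := ih
    refine ⟨y + algebraMap R A (f i) - f i • (x * y), ?_, ?_⟩
    · exact sub_mem (add_mem hyS (S.algebraMap_mem _)) (S.smul_mem (S.mul_mem hx hyS) _)
    · rw [List.map_cons, List.prod_cons, hy, Algebra.algebraMap_eq_smul_one]
      simp only [sub_mul, one_mul, mul_sub, mul_add, mul_one, smul_mul_assoc, mul_smul_comm]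
      abel

section GradedAlgebra

variable {ι R A : Type*} [CommSemiring R] [Semiring A] [Algebra R A]

theorem SetLike.graded_mul_le [Add ι] (𝒜 : ι → Submodule R A) [SetLike.GradedMul 𝒜] (i j : ι) :
    𝒜 i * 𝒜 j ≤ 𝒜 (i + j) :=
  Submodule.mul_le.2 fun _ ha _ hb => SetLike.mul_mem_graded ha hb

variable [AddGroup ι] (𝒜 : ι → Submodule R A) [SetLike.GradedMonoid 𝒜]

theorem SetLike.one_mem_graded_mul_neg_add {i j : ι} (hi : (1 : A) ∈ 𝒜 i * 𝒜 (-i))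
    (hj : (1 : A) ∈ 𝒜 j * 𝒜 (-j)) : (1 : A) ∈ 𝒜 (i + j) * 𝒜 (-(i + j)) := by
  have hle : 𝒜 i * 𝒜 (-i) ≤ 𝒜 (i + j) * 𝒜 (-(i + j)) :=
    calc 𝒜 i * 𝒜 (-i) = 𝒜 i * 1 * 𝒜 (-i) := by rw [mul_one]
      _ ≤ 𝒜 i * (𝒜 j * 𝒜 (-j)) * 𝒜 (-i) := by gcongr; exact Submodule.one_le.2 hj
      _ = (𝒜 i * 𝒜 j) * (𝒜 (-j) * 𝒜 (-i)) := by simp only [mul_assoc]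
      _ ≤ 𝒜 (i + j) * 𝒜 (-j + -i) :=
        mul_le_mul' (SetLike.graded_mul_le 𝒜 i j) (SetLike.graded_mul_le 𝒜 (-j) (-i))
      _ = 𝒜 (i + j) * 𝒜 (-(i + j)) := by rw [neg_add_rev]
  exact hle hi

theorem SetLike.graded_mul_eq_of_one_mem (h : ∀ n : ι, (1 : A) ∈ 𝒜 (-n) * 𝒜 n) (m n : ι) :
    𝒜 m * 𝒜 n = 𝒜 (m + n) := by
  refine le_antisymm (SetLike.graded_mul_le 𝒜 m n) ?_
  calc 𝒜 (m + n) = 𝒜 (m + n) * 1 := by rw [mul_one]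
    _ ≤ 𝒜 (m + n) * (𝒜 (-n) * 𝒜 n) := by gcongr; exact Submodule.one_le.2 (h n)
    _ = 𝒜 (m + n) * 𝒜 (-n) * 𝒜 n := by rw [mul_assoc]
    _ ≤ 𝒜 (m + n + -n) * 𝒜 n := by gcongr; exact SetLike.graded_mul_le 𝒜 _ _
    _ = 𝒜 m * 𝒜 n := by rw [add_neg_cancel_right]

end GradedAlgebra

theorem SetLike.one_mem_graded_mul_neg_of_one_mem {R A : Type*} [CommSemiring R] [Semiring A]
    [Algebra R A] (𝒜 : ℤ → Submodule R A) [SetLike.GradedMonoid 𝒜]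
    (h₁ : (1 : A) ∈ 𝒜 1 * 𝒜 (-1)) (h₂ : (1 : A) ∈ 𝒜 (-1) * 𝒜 1) (n : ℤ) :
    (1 : A) ∈ 𝒜 n * 𝒜 (-n) := by
  induction n using Int.induction_on with
  | zero => simpa using Submodule.mul_mem_mul (SetLike.one_mem_graded 𝒜) (SetLike.one_mem_graded 𝒜)
  | succ k ih => exact SetLike.one_mem_graded_mul_neg_add 𝒜 ih h₁
  | pred k ih =>
    have h₂' : (1 : A) ∈ 𝒜 (-1) * 𝒜 (-(-1)) := by rwa [neg_neg]
    simpa only [sub_eq_add_neg] using SetLike.one_mem_graded_mul_neg_add 𝒜 ih h₂'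

theorem SetLike.one_mem_graded_mul_of_mul_eq_prod {ι R A κ : Type*} [AddMonoid ι] [CommRing R]
    [Ring A] [Algebra R A] (𝒜 : ι → Submodule R A) [SetLike.GradedMonoid 𝒜] {i j : ι}
    (hij : i + j = 0) {a b u v : A} (ha : a ∈ 𝒜 i) (hb : b ∈ 𝒜 j) (hu : u ∈ 𝒜 i) (hv : v ∈ 𝒜 j)
    (f : κ → R) (L : List κ) (h : a * b = (L.map fun k => 1 - f k • (u * v)).prod) :
    (1 : A) ∈ 𝒜 i * 𝒜 j := by
  have huv : u * v ∈ SetLike.GradeZero.subalgebra 𝒜 :=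
    show u * v ∈ 𝒜 0 from hij ▸ SetLike.mul_mem_graded hu hv
  obtain ⟨y, hy, hprod⟩ := Subalgebra.exists_prod_map_one_sub_smul_eq huv f L
  have hvy : v * y ∈ 𝒜 j := by simpa using SetLike.mul_mem_graded hv hy
  have : a * b + u * (v * y) = 1 := by rw [h, hprod, mul_assoc, sub_add_cancel]
  exact this ▸ Submodule.add_mem _ (Submodule.mul_mem_mul ha hb) (Submodule.mul_mem_mul hu hvy)

theorem lens_space_strongly_graded_general
    (q : ℝ) (l : ℕ)
    {A : Type*} [Ring A] [Algebra ℂ A] [StarRing A] [StarModule ℂ A]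
    (c d : A) (huniv : IsUniversalLens q l c d)
    (𝒜 : ℤ → Submodule ℂ A) [GradedAlgebra 𝒜]
    (hc : c ∈ 𝒜 1) (hcs : star c ∈ 𝒜 (-1))
    (hd : d ∈ 𝒜 (-1)) (hds : star d ∈ 𝒜 1) :
    (∀ m n : ℤ, 𝒜 m * 𝒜 n = 𝒜 (m + n)) ∧
    (1 : A) ∈ 𝒜 1 * 𝒜 (-1) ∧ (1 : A) ∈ 𝒜 (-1) * 𝒜 1 := by
  obtain ⟨⟨-, -, hdd, hcc, hcc'⟩, -⟩ := huniv
  have h₁ : (1 : A) ∈ 𝒜 1 * 𝒜 (-1) :=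
    SetLike.one_mem_graded_mul_of_mul_eq_prod 𝒜 (add_neg_cancel 1) hc hcs hds hd _ _
      (hdd ▸ hcc)
  have h₂ : (1 : A) ∈ 𝒜 (-1) * 𝒜 1 :=
    SetLike.one_mem_graded_mul_of_mul_eq_prod 𝒜 (neg_add_cancel 1) hcs hc hd hds _ _ hcc'
  refine ⟨SetLike.graded_mul_eq_of_one_mem 𝒜 fun n => ?_, h₁, h₂⟩
  simpa using SetLike.one_mem_graded_mul_neg_of_one_mem 𝒜 h₁ h₂ (-n)

/-- The ℤ-graded algebra `O(L_q(l;1,l))` with grading determined by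
`deg c = 1`, `deg d = -1` is strongly graded: `L_m L_n = L_{m+n}` for all `m, n ∈ ℤ`;
in particular `1 ∈ L_1 L_{-1}` and `1 ∈ L_{-1} L_1`. -/
theorem lens_space_strongly_graded
    (q : ℝ) (hq0 : 0 < q) (hq1 : q < 1) (l : ℕ) (hl : 0 < l)
    {A : Type*} [Ring A] [Algebra ℂ A] [StarRing A] [StarModule ℂ A]
    (c d : A) (huniv : IsUniversalLens q l c d)
    (𝒜 : ℤ → Submodule ℂ A) [GradedAlgebra 𝒜]
    (hc : c ∈ 𝒜 1) (hcs : star c ∈ 𝒜 (-1))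
    (hd : d ∈ 𝒜 (-1)) (hds : star d ∈ 𝒜 1) :
    (∀ m n : ℤ, 𝒜 m * 𝒜 n = 𝒜 (m + n)) ∧
    (1 : A) ∈ 𝒜 1 * 𝒜 (-1) ∧ (1 : A) ∈ 𝒜 (-1) * 𝒜 1 :=
  lens_space_strongly_graded_general q l c d huniv 𝒜 hc hcs hd hds
end

section
/- Let 0<q<1 and let l be a positive integer. Consider the ℤ-grading on O(SU_q(2)) determined by deg α = 1, deg β = -l, with degree-n component A_n. Then for every integer m, 1 ∈ A_{ml}·A_{-ml}. (Thus the coaction α ↦ α⊗u, β ↦ β⊗u^{-l} is almost free: the image of the lifted canonical map contains O(SU_q(2))⊗ℂ[u^l,u^{-l}], so its cokernel is a finitely generated left O(SU_q(2))-module.) -/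
/-!
Put `x = α`, `x' = α*`, `y = β*`, `y' = β`. The relations give `x x' + y y' = 1`,
`x y = q y x` and `y' x' = q x' y'`, so inserting `1` between `x^k` and `x'^k` telescopes:
`x^k x'^k = x^{k+1} x'^{k+1} + q^{2k} y (x^k x'^k) y'`. Summing over `k < l` writes
`1 = α^l α*^l + Σ_k q^{2k} β* (α^k α*^k) β` as an element of `A_l A_{-l}`; the same argument
with `x = α*`, `y = β` and `α*α + q⁻² ββ* = 1` gives `1 ∈ A_{-l} A_l`. Finally, the degrees
`n` with `1 ∈ A_n A_{-n}` form an additive submonoid (if `1 = Σ aᵢbᵢ` and `1 = Σ cⱼdⱼ`, then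
`1 = Σ (aᵢcⱼ)(dⱼbᵢ)`), and one containing `±l` contains `lℤ`.
-/

theorem AddSubmonoid.zsmul_mem_of_neg_mem {G : Type*} [AddGroup G] {S : AddSubmonoid G}
    {x : G} (hx : x ∈ S) (hx' : -x ∈ S) (n : ℤ) : n • x ∈ S := by
  obtain ⟨k, rfl | rfl⟩ := Int.eq_nat_or_neg n
  · simpa using S.nsmul_mem hx k
  · simpa using S.nsmul_mem hx' k

section Commutation

variable {R A : Type*} [CommSemiring R] [Semiring A] [Algebra R A] {x y : A} {s : R}

theorem pow_mul_eq_smul_mul_pow (h : x * y = s • (y * x)) (k : ℕ) :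
    x ^ k * y = s ^ k • (y * x ^ k) := by
  induction k with
  | zero => simp
  | succ k ih =>
    rw [pow_succ', mul_assoc, ih, mul_smul_comm, ← mul_assoc, h, smul_mul_assoc, smul_smul,
      mul_assoc, ← pow_succ', ← pow_succ]

theorem mul_pow_eq_smul_pow_mul (h : y * x = s • (x * y)) (k : ℕ) :
    y * x ^ k = s ^ k • (x ^ k * y) := by
  induction k with
  | zero => simp
  | succ k ih =>
    rw [pow_succ, ← mul_assoc, ih, smul_mul_assoc, mul_assoc, h, mul_smul_comm, smul_smul,
      ← mul_assoc, ← pow_succ, pow_succ']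

theorem pow_mul_pow_eq_add_smul {x' y' : A} {r t : R} (h1 : x * x' + r • (y * y') = 1)
    (hxy : x * y = s • (y * x)) (hyx : y' * x' = t • (x' * y')) (k : ℕ) :
    x ^ k * x' ^ k =
      x ^ (k + 1) * x' ^ (k + 1) + (r * s ^ k * t ^ k) • (y * (x ^ k * x' ^ k) * y') := by
  calc x ^ k * x' ^ k = x ^ k * (x * x' + r • (y * y')) * x' ^ k := by rw [h1, mul_one]
    _ = x ^ (k + 1) * x' ^ (k + 1) + r • ((x ^ k * y) * (y' * x' ^ k)) := by
      rw [pow_succ, pow_succ']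
      simp only [mul_add, add_mul, mul_smul_comm, smul_mul_assoc, mul_assoc]
    _ = _ := by
      rw [pow_mul_eq_smul_mul_pow hxy, mul_pow_eq_smul_pow_mul hyx, smul_mul_smul_comm,
        smul_smul, ← mul_assoc]
      simp only [mul_assoc]

end Commutation

section Graded

variable {ι R A : Type*} [AddGroup ι] [CommRing R] [Ring A] [Algebra R A]
  (𝒜 : ι → Submodule R A) [SetLike.GradedMonoid 𝒜]

theorem SetLike.GradedMonoid.mul_le (i j : ι) : 𝒜 i * 𝒜 j ≤ 𝒜 (i + j) :=
  Submodule.mul_le.2 fun _ ha _ hb => SetLike.mul_mem_graded ha hb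

/-- `𝒜` is strongly graded exactly when this is `⊤`. -/
def strongDegrees : AddSubmonoid ι where
  carrier := {n | (1 : A) ∈ 𝒜 n * 𝒜 (-n)}
  zero_mem' := by
    simpa using Submodule.mul_mem_mul (SetLike.one_mem_graded 𝒜) (SetLike.one_mem_graded 𝒜)
  add_mem' {a b} ha hb := by
    suffices 𝒜 a * 𝒜 (-a) ≤ 𝒜 (a + b) * 𝒜 (-(a + b)) from this ha
    calc 𝒜 a * 𝒜 (-a) = 𝒜 a * 1 * 𝒜 (-a) := by rw [mul_one]
      _ ≤ 𝒜 a * (𝒜 b * 𝒜 (-b)) * 𝒜 (-a) := by gcongr; exact Submodule.one_le.2 hb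
      _ = (𝒜 a * 𝒜 b) * (𝒜 (-b) * 𝒜 (-a)) := by simp only [mul_assoc]
      _ ≤ 𝒜 (a + b) * 𝒜 (-b + -a) := by
        gcongr <;> exact SetLike.GradedMonoid.mul_le 𝒜 _ _
      _ = 𝒜 (a + b) * 𝒜 (-(a + b)) := by rw [neg_add_rev]

@[simp]
theorem mem_strongDegrees {n : ι} : n ∈ strongDegrees 𝒜 ↔ (1 : A) ∈ 𝒜 n * 𝒜 (-n) :=
  Iff.rfl

variable {𝒜} {x x' y y' : A} {r s t : R} {d e : ι}

theorem one_sub_pow_mul_pow_mem_mul_neg (h1 : x * x' + r • (y * y') = 1)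
    (hxy : x * y = s • (y * x)) (hyx : y' * x' = t • (x' * y')) (hx : x ∈ 𝒜 d)
    (hx' : x' ∈ 𝒜 (-d)) (hy : y ∈ 𝒜 e) (hy' : y' ∈ 𝒜 (-e)) (k : ℕ) :
    1 - x ^ k * x' ^ k ∈ 𝒜 e * 𝒜 (-e) := by
  induction k with
  | zero => simp
  | succ k ih =>
    have h0 : x ^ k * x' ^ k ∈ 𝒜 0 := by
      simpa using
        SetLike.mul_mem_graded (SetLike.pow_mem_graded k hx) (SetLike.pow_mem_graded k hx')
    have hterm : y * (x ^ k * x' ^ k) * y' ∈ 𝒜 e * 𝒜 (-e) := by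
      rw [mul_assoc]
      exact Submodule.mul_mem_mul hy (by simpa using SetLike.mul_mem_graded h0 hy')
    convert add_mem ih (Submodule.smul_mem _ (r * s ^ k * t ^ k) hterm) using 1
    rw [sub_add, sub_right_inj, eq_sub_iff_add_eq]
    exact (pow_mul_pow_eq_add_smul h1 hxy hyx k).symm

theorem mem_strongDegrees_of_rels (h1 : x * x' + r • (y * y') = 1)
    (hxy : x * y = s • (y * x)) (hyx : y' * x' = t • (x' * y')) (hx : x ∈ 𝒜 d)
    (hx' : x' ∈ 𝒜 (-d)) (hy : y ∈ 𝒜 e) (hy' : y' ∈ 𝒜 (-e)) (n : ℕ) (hn : n • d = e) :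
    e ∈ strongDegrees 𝒜 := by
  have hxn : x ^ n ∈ 𝒜 e := hn ▸ SetLike.pow_mem_graded n hx
  have hx'n : x' ^ n ∈ 𝒜 (-e) := by simpa [← hn] using SetLike.pow_mem_graded n hx'
  simpa using add_mem (one_sub_pow_mul_pow_mem_mul_neg h1 hxy hyx hx hx' hy hy' n)
    (Submodule.mul_mem_mul hxn hx'n)

end Graded

namespace SUq2Rels

variable {A : Type*} [Ring A] [Algebra ℂ A] [StarRing A] {q : ℝ} {α β : A}

theorem beta_mul_star_alpha [StarModule ℂ A] (h : SUq2Rels q α β) :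
    β * star α = (q : ℂ) • (star α * β) := by
  simpa [star_smul] using congrArg star h.rel2

theorem star_alpha_mul_alpha_add (h : SUq2Rels q α β) :
    star α * α + ((q : ℂ)⁻¹ ^ 2) • (β * star β) = 1 := by
  rw [← h.rel5, h.rel4, sub_smul, one_smul]
  abel

theorem star_alpha_mul_beta [StarModule ℂ A] (h : SUq2Rels q α β) (hq : q ≠ 0) :
    star α * β = (q : ℂ)⁻¹ • (β * star α) := by
  rw [h.beta_mul_star_alpha, inv_smul_smul₀ (Complex.ofReal_ne_zero.2 hq)]

theorem star_beta_mul_alpha (h : SUq2Rels q α β) (hq : q ≠ 0) :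
    star β * α = (q : ℂ)⁻¹ • (α * star β) := by
  rw [h.rel2, inv_smul_smul₀ (Complex.ofReal_ne_zero.2 hq)]

end SUq2Rels

theorem almost_free_coaction_general
    (q : ℝ) (hq0 : 0 < q) (l : ℕ)
    {A : Type*} [Ring A] [Algebra ℂ A] [StarRing A] [StarModule ℂ A]
    (α β : A) (huniv : IsUniversalSUq2 q α β)
    (𝒜 : ℤ → Submodule ℂ A) [GradedAlgebra 𝒜]
    (hα : α ∈ 𝒜 1) (hαs : star α ∈ 𝒜 (-1))
    (hβ : β ∈ 𝒜 (-(l : ℤ))) (hβs : star β ∈ 𝒜 (l : ℤ)) :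
    ∀ m : ℤ, (1 : A) ∈ 𝒜 (m * l) * 𝒜 (-(m * l)) := by
  obtain ⟨h, -⟩ := huniv
  have hpos : (l : ℤ) ∈ strongDegrees 𝒜 :=
    mem_strongDegrees_of_rels (r := 1) (by rw [one_smul, ← h.rel3, h.rel5]) h.rel2
      h.beta_mul_star_alpha hα hαs hβs hβ l (by simp)
  have hneg : -(l : ℤ) ∈ strongDegrees 𝒜 :=
    mem_strongDegrees_of_rels h.star_alpha_mul_alpha_add (h.star_alpha_mul_beta hq0.ne')
      (h.star_beta_mul_alpha hq0.ne') hαs (by rwa [neg_neg]) hβ (by rwa [neg_neg]) l (by simp)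
  intro m
  simpa using AddSubmonoid.zsmul_mem_of_neg_mem hpos hneg m

/-- For the ℤ-grading on `O(SU_q(2))` determined by `deg α = 1`,
`deg β = -l`, one has `1 ∈ A_{ml} · A_{-ml}` for every integer `m` (almost freeness of
the coaction `α ↦ α⊗u`, `β ↦ β⊗u^{-l}`). -/
theorem almost_free_coaction
    (q : ℝ) (hq0 : 0 < q) (hq1 : q < 1) (l : ℕ) (hl : 0 < l)
    {A : Type*} [Ring A] [Algebra ℂ A] [StarRing A] [StarModule ℂ A]
    (α β : A) (huniv : IsUniversalSUq2 q α β)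
    (𝒜 : ℤ → Submodule ℂ A) [GradedAlgebra 𝒜]
    (hα : α ∈ 𝒜 1) (hαs : star α ∈ 𝒜 (-1))
    (hβ : β ∈ 𝒜 (-(l : ℤ))) (hβs : star β ∈ 𝒜 (l : ℤ)) :
    ∀ m : ℤ, (1 : A) ∈ 𝒜 (m * l) * 𝒜 (-(m * l)) :=
  almost_free_coaction_general q hq0 l α β huniv 𝒜 hα hαs hβ hβs
end

section
/- Let 0<q<1, let k,l be coprime positive integers and let s ∈ {1,…,l}. For every integer m ≥ 1 and every n ∈ ℕ, the family of diagonal matrix coefficients p ↦ ⟨e_p, A_s^m B_s^n e_p⟩ is absolutely summable, with sum equal to q^{2ms}/(1-q^{2ml}) if n = 0 and equal to 0 if n ≥ 1; likewise for every n' ≥ 1 the sum of p ↦ ⟨e_p, A_s^m (B_s*)^{n'} e_p⟩ equals 0. (These are the values τ_s(a^m b^n) of the Chern character of the 1-summable Fredholm module associated to π_s.) -/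
noncomputable section

/-!
`A` is diagonal in the basis `(e p)` and `B` is a weighted backward shift, so its adjoint is a
weighted forward shift. Hence `A^m B^n` (`n ≥ 1`) and `A^m B*^n'` map each `e p` into the line of
another basis vector and have zero diagonal, while the diagonal of `A^m` is the geometric
sequence `q^{2ms} (q^{2ml})^p`.
-/

open Submodule ContinuousLinearMap
open scoped InnerProductSpace

section Lines

variable {R M : Type*} [Semiring R] [AddCommMonoid M] [Module R M]

theorem apply_mem_span_singleton_of_mem {N F : Type*} [AddCommMonoid N] [Module R N]
    [FunLike F M N] [LinearMapClass F R M N] (f : F) {v x : M} {w : N}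
    (hx : x ∈ R ∙ v) (hv : f v ∈ R ∙ w) : f x ∈ R ∙ w := by
  obtain ⟨a, rfl⟩ := mem_span_singleton.1 hx
  rw [map_smul]
  exact smul_mem _ a hv

variable [TopologicalSpace M]

theorem ContinuousLinearMap.pow_apply_of_apply_eq_smul {T : M →L[R] M} {v : M} {c : R}
    (h : T v = c • v) (n : ℕ) : (T ^ n) v = c ^ n • v := by
  induction n with
  | zero => simp
  | succ n ih => rw [pow_succ, mul_apply_eq_comp, h, map_smul, ih, smul_smul, ← pow_succ']

theorem ContinuousLinearMap.pow_apply_mem_span_singleton_iterate {ι : Type*} {T : M →L[R] M}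
    {v : ι → M} {σ : ι → ι} (hT : ∀ i, T (v i) ∈ R ∙ v (σ i)) (n : ℕ) (i : ι) :
    (T ^ n) (v i) ∈ R ∙ v (σ^[n] i) := by
  induction n generalizing i with
  | zero => simp
  | succ n ih =>
    rw [pow_succ, mul_apply_eq_comp, Function.iterate_succ_apply]
    exact apply_mem_span_singleton_of_mem _ (hT i) (ih (σ i))

end Lines

section Shift

variable {𝕜 E ι : Type*} [RCLike 𝕜] [NormedAddCommGroup E] [InnerProductSpace 𝕜 E]

theorem Orthonormal.inner_eq_zero_of_mem_span_singleton {v : ι → E} (hv : Orthonormal 𝕜 v)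
    {i j : ι} (hij : i ≠ j) {x : E} (hx : x ∈ 𝕜 ∙ v j) : ⟪v i, x⟫_𝕜 = 0 := by
  obtain ⟨a, rfl⟩ := mem_span_singleton.1 hx
  rw [inner_smul_right, hv.inner_eq_zero hij, mul_zero]

theorem Orthonormal.inner_mul_apply_self_eq_zero {v : ι → E} (hv : Orthonormal 𝕜 v)
    {A X : E →L[𝕜] E} (hA : ∀ j, A (v j) ∈ 𝕜 ∙ v j) {i j : ι} (hX : X (v i) ∈ 𝕜 ∙ v j)
    (hij : i ≠ j) : ⟪v i, (A * X) (v i)⟫_𝕜 = 0 :=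
  hv.inner_eq_zero_of_mem_span_singleton hij (apply_mem_span_singleton_of_mem A hX (hA j))

theorem Orthonormal.inner_mul_pow_succ_apply_self_eq_zero {v : ℕ → E} (hv : Orthonormal 𝕜 v)
    {A B : E →L[𝕜] E} (hA : ∀ j, A (v j) ∈ 𝕜 ∙ v j) (hB0 : B (v 0) = 0)
    (hB : ∀ p, B (v (p + 1)) ∈ 𝕜 ∙ v p) (n p : ℕ) :
    ⟪v p, (A * B ^ (n + 1)) (v p)⟫_𝕜 = 0 := by
  have hB_pred (p : ℕ) : B (v p) ∈ 𝕜 ∙ v p.pred := by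
    rcases p with _ | p
    · exact hB0 ▸ zero_mem _
    · exact hB p
  rcases p with _ | p
  · rw [mul_apply_eq_comp, pow_succ, mul_apply_eq_comp, hB0, map_zero, map_zero,
      inner_zero_right]
  · refine hv.inner_mul_apply_self_eq_zero hA (pow_apply_mem_span_singleton_iterate hB_pred _ _) ?_
    rw [Nat.pred_iterate]
    omega

theorem HilbertBasis.mem_span_singleton_of_inner_eq_zero (b : HilbertBasis ι 𝕜 E) {i : ι}
    {x : E} (h : ∀ j ≠ i, ⟪b j, x⟫_𝕜 = 0) : x ∈ 𝕜 ∙ b i := by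
  have hx : HasSum (fun j => ⟪b j, x⟫_𝕜 • b j) (⟪b i, x⟫_𝕜 • b i) :=
    hasSum_single i fun j hj => by rw [h j hj, zero_smul]
  refine mem_span_singleton.2 ⟨_, hx.unique ?_⟩
  simpa only [b.repr_apply_apply] using b.hasSum_repr x

variable [CompleteSpace E] (b : HilbertBasis ℕ 𝕜 E) {B : E →L[𝕜] E}

theorem HilbertBasis.adjoint_apply_mem_span_succ (hB0 : B (b 0) = 0)
    (hB : ∀ p, B (b (p + 1)) ∈ 𝕜 ∙ b p) (p : ℕ) : adjoint B (b p) ∈ 𝕜 ∙ b (p + 1) := by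
  refine b.mem_span_singleton_of_inner_eq_zero fun j hj => ?_
  rw [adjoint_inner_right]
  rcases j with _ | j
  · rw [hB0, inner_zero_left]
  · rw [← inner_eq_zero_symm]
    exact b.orthonormal.inner_eq_zero_of_mem_span_singleton (by omega) (hB j)

theorem HilbertBasis.inner_mul_adjoint_pow_succ_apply_self_eq_zero {A : E →L[𝕜] E}
    (hA : ∀ j, A (b j) ∈ 𝕜 ∙ b j) (hB0 : B (b 0) = 0) (hB : ∀ p, B (b (p + 1)) ∈ 𝕜 ∙ b p)
    (n p : ℕ) : ⟪b p, (A * adjoint B ^ (n + 1)) (b p)⟫_𝕜 = 0 := by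
  refine b.orthonormal.inner_mul_apply_self_eq_zero hA
    (pow_apply_mem_span_singleton_iterate (b.adjoint_apply_mem_span_succ hB0 hB) _ _) ?_
  rw [Nat.succ_iterate]
  omega

end Shift

theorem summable_norm_and_hasSum_mul_geometric {K : Type*} [NormedDivisionRing K]
    [CompleteSpace K] (c : K) {r : K} (hr : ‖r‖ < 1) :
    Summable (fun p : ℕ => ‖c * r ^ p‖) ∧ HasSum (fun p : ℕ => c * r ^ p) (c / (1 - r)) := by
  refine ⟨?_, ?_⟩
  · simpa only [norm_mul, norm_pow] using
      (summable_geometric_of_lt_one (norm_nonneg _) hr).mul_left ‖c‖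
  · simpa only [div_eq_mul_inv] using (hasSum_geometric_of_norm_lt_one hr).mul_left c

def eBasis : HilbertBasis ℕ ℂ ℓ2 := HilbertBasis.ofRepr (LinearIsometryEquiv.refl ℂ ℓ2)

theorem coe_eBasis : ⇑eBasis = e := by
  funext p
  rw [← eBasis.repr_symm_single]
  rfl

theorem chern_character_values_general
    (q : ℝ) (hq0 : 0 < q) (hq1 : q < 1)
    (k l : ℕ) (hl : 0 < l)
    (s : ℕ)
    (A B : ℓ2 →L[ℂ] ℓ2)
    (hA : ∀ p : ℕ, A (e p) = ((q : ℂ) ^ (2 * (l * p + s))) • e p)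
    (hB0 : B (e 0) = 0)
    (hB : ∀ p : ℕ, B (e (p + 1)) =
      (((q : ℂ) ^ (k * (l * (p + 1) + s))) *
        ((∏ r ∈ Finset.range l,
          Real.sqrt (1 - q ^ (2 * (l * (p + 1) + s) - 2 * (r + 1))) : ℝ) : ℂ)) • e p)
    (m : ℕ) (hm : 1 ≤ m) :
    (∀ n : ℕ,
      Summable (fun p : ℕ => ‖(@inner ℂ _ _ (e p) ((A ^ m * B ^ n) (e p)))‖) ∧
      HasSum (fun p : ℕ => (@inner ℂ _ _ (e p) ((A ^ m * B ^ n) (e p))))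
        (if n = 0 then (q : ℂ) ^ (2 * m * s) / (1 - (q : ℂ) ^ (2 * m * l)) else 0)) ∧
    (∀ n' : ℕ,
      Summable (fun p : ℕ =>
        ‖(@inner ℂ _ _ (e p) ((A ^ m * (star B) ^ (n' + 1)) (e p)))‖) ∧
      HasSum (fun p : ℕ =>
        (@inner ℂ _ _ (e p) ((A ^ m * (star B) ^ (n' + 1)) (e p)))) 0) := by
  rw [← coe_eBasis] at hA hB0 hB ⊢
  have hAm (p : ℕ) : (A ^ m) (eBasis p) =
      ((q : ℂ) ^ (2 * m * s) * ((q : ℂ) ^ (2 * m * l)) ^ p) • eBasis p := by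
    rw [pow_apply_of_apply_eq_smul (hA p), ← pow_mul, ← pow_mul, ← pow_add]
    ring_nf
  have hAm_line (p : ℕ) : (A ^ m) (eBasis p) ∈ ℂ ∙ eBasis p :=
    hAm p ▸ smul_mem _ _ (mem_span_singleton_self _)
  have hB_line (p : ℕ) : B (eBasis (p + 1)) ∈ ℂ ∙ eBasis p :=
    hB p ▸ smul_mem _ _ (mem_span_singleton_self _)
  refine ⟨fun n => ?_, fun n => ?_⟩
  · rcases n with _ | n
    · have hr : ‖(q : ℂ) ^ (2 * m * l)‖ < 1 := by
        rw [norm_pow, Complex.norm_real, Real.norm_of_nonneg hq0.le]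
        exact pow_lt_one₀ hq0.le hq1 (by positivity)
      simp only [pow_zero, mul_one, hAm, inner_smul_right,
        inner_self_eq_one_of_norm_eq_one (eBasis.orthonormal.1 _), if_pos]
      exact summable_norm_and_hasSum_mul_geometric _ hr
    · simp only [eBasis.orthonormal.inner_mul_pow_succ_apply_self_eq_zero hAm_line hB0 hB_line,
        norm_zero, if_neg n.succ_ne_zero]
      exact ⟨summable_zero, hasSum_zero⟩
  · simp only [star_eq_adjoint,
      eBasis.inner_mul_adjoint_pow_succ_apply_self_eq_zero hAm_line hB0 hB_line, norm_zero]
    exact ⟨summable_zero, hasSum_zero⟩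

/-- For `m ≥ 1`, the diagonal matrix coefficients
`p ↦ ⟨e_p, A_s^m B_s^n e_p⟩` are absolutely summable, with sum `q^{2ms}/(1-q^{2ml})`
if `n = 0` and sum `0` if `n ≥ 1`; likewise `p ↦ ⟨e_p, A_s^m (B_s*)^{n'} e_p⟩` sums to
`0` for `n' ≥ 1`.  (Values `τ_s(a^m b^n)` of the Chern character of the associated
1-summable Fredholm module.) -/
theorem chern_character_values
    (q : ℝ) (hq0 : 0 < q) (hq1 : q < 1)
    (k l : ℕ) (hk : 0 < k) (hl : 0 < l) (hkl : Nat.Coprime k l)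
    (s : ℕ) (hs1 : 1 ≤ s) (hsl : s ≤ l)
    (A B : ℓ2 →L[ℂ] ℓ2)
    (hA : ∀ p : ℕ, A (e p) = ((q : ℂ) ^ (2 * (l * p + s))) • e p)
    (hB0 : B (e 0) = 0)
    (hB : ∀ p : ℕ, B (e (p + 1)) =
      (((q : ℂ) ^ (k * (l * (p + 1) + s))) *
        ((∏ r ∈ Finset.range l,
          Real.sqrt (1 - q ^ (2 * (l * (p + 1) + s) - 2 * (r + 1))) : ℝ) : ℂ)) • e p)
    (m : ℕ) (hm : 1 ≤ m) :
    (∀ n : ℕ,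
      Summable (fun p : ℕ => ‖(@inner ℂ _ _ (e p) ((A ^ m * B ^ n) (e p)))‖) ∧
      HasSum (fun p : ℕ => (@inner ℂ _ _ (e p) ((A ^ m * B ^ n) (e p))))
        (if n = 0 then (q : ℂ) ^ (2 * m * s) / (1 - (q : ℂ) ^ (2 * m * l)) else 0)) ∧
    (∀ n' : ℕ,
      Summable (fun p : ℕ =>
        ‖(@inner ℂ _ _ (e p) ((A ^ m * (star B) ^ (n' + 1)) (e p)))‖) ∧
      HasSum (fun p : ℕ =>
        (@inner ℂ _ _ (e p) ((A ^ m * (star B) ^ (n' + 1)) (e p)))) 0) :=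
  chern_character_values_general q hq0 hq1 k l hl s A B hA hB0 hB m hm
end
end

section
/- Let 0<q<1 and let l be a positive integer. For every real number t, ∏_{m=0}^{l-1}(1 - q^{2m} t) - ∑_{m=1}^{l} (-1)^m q^{-m(m+1)} binom(l,m)_{q^{-2}} t^m = 1 + ∑_{m=1}^{l} (-1)^m q^{m(m-1)} (1 - q^{-2ml}) binom(l,m)_{q^2} t^m. (This is the computation of the trace of the idempotent E[1] of the line bundle L[1] over the quantum teardrop: Tr E[1] = 1 + ∑_{m=1}^{l} (-1)^m q^{m(m-1)}(1-q^{-2ml}) binom(l,m)_{q^2} a^m.) -/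
noncomputable def qbinom (x : ℝ) (l m : ℕ) : ℝ :=
  ∏ i ∈ Finset.range m, (1 - x ^ (l - m + i + 1)) / (1 - x ^ (i + 1))

/-!
Expanding the product by the q-binomial theorem with `x = q²`, `s = -t` gives the coefficients
`(-1)^m q^{m(m-1)} binom(l,m)_{q²}`. The inversion rule
`binom(l,m)_{x⁻¹} = x^{-m(l-m)} binom(l,m)_x` turns the subtracted coefficients into
`(-1)^m q^{m(m-1)-2ml} binom(l,m)_{q²}`, so the identity holds coefficientwise.
The q-binomial theorem follows by induction on `l` from the q-Pascal rule, which is read off the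
quotient formula `binom(l,m)_x = (x;x)_l / ((x;x)_m (x;x)_{l-m})`.
-/

open Finset

/-- The q-Pochhammer symbol `(x; x)_k`. -/
noncomputable def qPochhammer (x : ℝ) (k : ℕ) : ℝ := ∏ i ∈ range k, (1 - x ^ (i + 1))

section QBinom

variable {x : ℝ}

lemma one_sub_pow_ne_zero (hx : |x| ≠ 1) {i : ℕ} (hi : i ≠ 0) : 1 - x ^ i ≠ 0 := by
  refine sub_ne_zero.2 fun h => hx ?_
  rw [← pow_eq_one_iff_of_nonneg (abs_nonneg x) hi, ← abs_pow, ← h, abs_one]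

lemma qPochhammer_ne_zero (hx : |x| ≠ 1) (k : ℕ) : qPochhammer x k ≠ 0 :=
  prod_ne_zero_iff.2 fun i _ => one_sub_pow_ne_zero hx i.succ_ne_zero

lemma qPochhammer_succ (x : ℝ) (k : ℕ) :
    qPochhammer x (k + 1) = qPochhammer x k * (1 - x ^ (k + 1)) :=
  prod_range_succ _ _

lemma qbinom_eq_div (hx : |x| ≠ 1) {l m : ℕ} (h : m ≤ l) :
    qbinom x l m = qPochhammer x l / (qPochhammer x m * qPochhammer x (l - m)) := by
  obtain ⟨k, rfl⟩ := Nat.exists_eq_add_of_le h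
  have hsplit : qPochhammer x (m + k) =
      qPochhammer x k * ∏ i ∈ range m, (1 - x ^ (k + i + 1)) := by
    rw [qPochhammer, add_comm m k, prod_range_add]
    rfl
  rw [qbinom, Nat.add_sub_cancel_left, prod_div_distrib, hsplit, mul_comm (qPochhammer x m),
    mul_div_mul_left _ _ (qPochhammer_ne_zero hx k)]
  rfl

lemma qbinom_zero (x : ℝ) (l : ℕ) : qbinom x l 0 = 1 := by
  simp [qbinom]

lemma qbinom_self (hx : |x| ≠ 1) (l : ℕ) : qbinom x l l = 1 := by
  rw [qbinom, Nat.sub_self]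
  exact prod_eq_one fun i _ => by rw [zero_add, div_self (one_sub_pow_ne_zero hx i.succ_ne_zero)]

lemma qbinom_succ_succ (hx : |x| ≠ 1) {l m : ℕ} (h : m < l) :
    qbinom x (l + 1) (m + 1) = qbinom x l (m + 1) + x ^ (l - m) * qbinom x l m := by
  obtain ⟨k, rfl⟩ := Nat.exists_eq_add_of_lt h
  rw [qbinom_eq_div hx (by omega), qbinom_eq_div hx (by omega), qbinom_eq_div hx (by omega),
    show m + k + 1 + 1 - (m + 1) = k + 1 by omega, show m + k + 1 - (m + 1) = k by omega,
    show m + k + 1 - m = k + 1 by omega, qPochhammer_succ x (m + k + 1), qPochhammer_succ x k,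
    qPochhammer_succ x m]
  have := qPochhammer_ne_zero hx (m + k + 1)
  have := qPochhammer_ne_zero hx k
  have := qPochhammer_ne_zero hx m
  have := one_sub_pow_ne_zero hx (Nat.succ_ne_zero (m + k + 1))
  have := one_sub_pow_ne_zero hx k.succ_ne_zero
  have := one_sub_pow_ne_zero hx m.succ_ne_zero
  field_simp
  ring

lemma qbinom_inv (hx : x ≠ 0) (l m : ℕ) :
    qbinom x⁻¹ l m = qbinom x l m / x ^ (m * (l - m)) := by
  have hfactor (c b : ℕ) :
      (1 - x⁻¹ ^ (c + b)) / (1 - x⁻¹ ^ b) = (1 - x ^ (c + b)) / (1 - x ^ b) / x ^ c := by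
    rw [inv_pow, inv_pow, pow_add]
    by_cases hb : x ^ b = 1
    · simp [hb] -- both sides are `_ / 0 = 0`
    have : 1 - x ^ b ≠ 0 := sub_ne_zero.2 (Ne.symm hb)
    have : 1 - (x ^ b)⁻¹ ≠ 0 := by rwa [sub_ne_zero, ne_comm, inv_ne_one]
    field_simp
    ring
  have hpow : x ^ (m * (l - m)) = ∏ _i ∈ range m, x ^ (l - m) := by
    rw [prod_const, card_range, ← pow_mul, mul_comm]
  rw [qbinom, qbinom, hpow, ← prod_div_distrib]
  exact prod_congr rfl fun i _ => hfactor (l - m) (i + 1)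

theorem prod_one_add_pow_mul_eq_sum_qbinom (hx : |x| ≠ 1) (l : ℕ) (s : ℝ) :
    ∏ i ∈ range l, (1 + x ^ i * s) =
      ∑ m ∈ range (l + 1), x ^ m.choose 2 * qbinom x l m * s ^ m := by
  induction l with
  | zero => simp [qbinom_zero]
  | succ l ih =>
    set c : ℕ → ℝ := fun m => x ^ m.choose 2 * qbinom x l m * s ^ m with hc
    have hchoose (m : ℕ) : (m + 1).choose 2 = m.choose 2 + m := by
      rw [Nat.choose_succ_succ', Nat.choose_one_right, add_comm]
    have hpascal : ∀ m ∈ range l, x ^ (m + 1).choose 2 * qbinom x (l + 1) (m + 1) * s ^ (m + 1)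
        = c (m + 1) + x ^ l * s * c m := by
      intro m hm
      have hml : m < l := mem_range.1 hm
      have hexp : x ^ (m.choose 2 + m) * x ^ (l - m) = x ^ l * x ^ m.choose 2 := by
        rw [← pow_add, ← pow_add, add_assoc, Nat.add_sub_cancel' hml.le, add_comm]
      rw [qbinom_succ_succ hx hml]
      simp only [hc, hchoose]
      linear_combination qbinom x l m * s ^ (m + 1) * hexp
    have htop :
        x ^ (l + 1).choose 2 * qbinom x (l + 1) (l + 1) * s ^ (l + 1) = x ^ l * s * c l := by
      simp only [hc, qbinom_self hx, hchoose]
      ring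
    have hzero : x ^ (0 : ℕ).choose 2 * qbinom x (l + 1) 0 * s ^ 0 = c 0 := by
      simp only [hc, qbinom_zero]
    calc ∏ i ∈ range (l + 1), (1 + x ^ i * s)
        = (∑ m ∈ range l, c (m + 1) + c 0) + x ^ l * s * (∑ m ∈ range l, c m + c l) := by
          rw [prod_range_succ, ih, ← sum_range_succ', ← sum_range_succ]
          ring
      _ = _ := by
          rw [sum_range_succ' _ (l + 1), sum_range_succ, sum_congr rfl hpascal, htop, hzero,
            sum_add_distrib, mul_add, mul_sum]
          ring

end QBinom

lemma pow_mul_qbinom_sq_sub_qbinom_inv_sq {q : ℝ} (hq : q ≠ 0) {l m : ℕ} (hml : m ≤ l) :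
    q ^ (m * (m - 1)) * qbinom (q ^ 2) l m - (q ^ (m * (m + 1)))⁻¹ * qbinom (q⁻¹ ^ 2) l m =
      q ^ (m * (m - 1)) * (1 - (q ^ (2 * m * l))⁻¹) * qbinom (q ^ 2) l m := by
  have hexp :
      q ^ (m * (m - 1)) * q ^ (m * (m + 1)) * (q ^ 2) ^ (m * (l - m)) = q ^ (2 * m * l) := by
    rw [← pow_mul, ← pow_add, ← pow_add]
    congr 1
    obtain ⟨k, rfl⟩ := Nat.exists_eq_add_of_le hml
    cases m <;> simp only [Nat.add_sub_cancel_left, Nat.add_sub_cancel] <;> ring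
  have hinv : (q ^ (m * (m + 1)))⁻¹ * ((q ^ 2) ^ (m * (l - m)))⁻¹ =
      q ^ (m * (m - 1)) * (q ^ (2 * m * l))⁻¹ := by
    rw [← hexp]
    field_simp
  rw [inv_pow, qbinom_inv (pow_ne_zero 2 hq), div_eq_mul_inv]
  linear_combination (-qbinom (q ^ 2) l m) * hinv

theorem trace_idempotent_identity_general
    (q : ℝ) (hq0 : 0 < q) (hq1 : q < 1) (l : ℕ) (t : ℝ) :
    (∏ m ∈ Finset.range l, (1 - q ^ (2 * m) * t))
      - ∑ m ∈ Finset.Icc 1 l,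
          (-1 : ℝ) ^ m * (q ^ (m * (m + 1)))⁻¹ * qbinom (q⁻¹ ^ 2) l m * t ^ m
    = 1 + ∑ m ∈ Finset.Icc 1 l,
          (-1 : ℝ) ^ m * q ^ (m * (m - 1)) * (1 - (q ^ (2 * m * l))⁻¹) *
            qbinom (q ^ 2) l m * t ^ m := by
  have hx : |q ^ 2| ≠ 1 := by
    rw [abs_of_pos (by positivity)]
    exact (pow_lt_one₀ hq0.le hq1 two_ne_zero).ne
  have hprod :
      ∏ m ∈ range l, (1 - q ^ (2 * m) * t) = ∏ m ∈ range l, (1 + (q ^ 2) ^ m * -t) := by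
    simp only [← pow_mul, mul_neg, ← sub_eq_add_neg]
  rw [hprod, prod_one_add_pow_mul_eq_sum_qbinom hx, Nat.range_succ_eq_Icc_zero,
    ← insert_Icc_add_one_left_eq_Icc l.zero_le, sum_insert (by simp), Nat.choose_zero_succ,
    qbinom_zero, zero_add, pow_zero, pow_zero, mul_one, one_mul, add_sub_assoc,
    ← sum_sub_distrib]
  congr 1
  refine sum_congr rfl fun m hm => ?_
  have hchoose : 2 * m.choose 2 = m * (m - 1) := by
    rw [Nat.choose_two_right, Nat.mul_div_cancel' (Nat.even_mul_pred_self m).two_dvd]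
  rw [← pow_mul, hchoose, neg_pow]
  linear_combination (-1) ^ m * t ^ m *
    pow_mul_qbinom_sq_sub_qbinom_inv_sq hq0.ne' (mem_Icc.1 hm).2

/-- For every real `t`,
`∏_{m=0}^{l-1}(1 - q^{2m}t) - ∑_{m=1}^{l} (-1)^m q^{-m(m+1)} binom(l,m)_{q^{-2}} t^m
 = 1 + ∑_{m=1}^{l} (-1)^m q^{m(m-1)} (1 - q^{-2ml}) binom(l,m)_{q^2} t^m`
(the computation of the trace of the idempotent `E[1]`). -/
theorem trace_idempotent_identity
    (q : ℝ) (hq0 : 0 < q) (hq1 : q < 1) (l : ℕ) (hl : 0 < l) (t : ℝ) :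
    (∏ m ∈ Finset.range l, (1 - q ^ (2 * m) * t))
      - ∑ m ∈ Finset.Icc 1 l,
          (-1 : ℝ) ^ m * (q ^ (m * (m + 1)))⁻¹ * qbinom (q⁻¹ ^ 2) l m * t ^ m
    = 1 + ∑ m ∈ Finset.Icc 1 l,
          (-1 : ℝ) ^ m * q ^ (m * (m - 1)) * (1 - (q ^ (2 * m * l))⁻¹) *
            qbinom (q ^ 2) l m * t ^ m :=
  trace_idempotent_identity_general q hq0 hq1 l t
end
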